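/- Let I = (A,b,d) be a Horn integer linear system and let s be a feasible solution of I. Let m be the unique minimal solution of the connected component of G(I) containing s (i.e., m is feasible, lies in the same component as s, and m ≤ x for every feasible x in that component). Then there exists a monotone path in G(I) from s to m, i.e., a path s = u^0 → u^1 → … → u^ℓ = m with u^0 ≥ u^1 ≥ … ≥ u^ℓ componentwise. -/

import Mathlib

/-- A feasible solution of the integer linear system `(A, b, d)`:
an integer vector with entries in `{0, …, d}` satisfying `A x ≥ b`. -/
def Feasible {m n : ℕ} (A : Matrix (Fin m) (Fin n) ℚ) (b : Fin m → ℚ) (d : ℕ)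
    (x : Fin n → ℤ) : Prop :=
  (∀ j, 0 ≤ x j ∧ x j ≤ (d : ℤ)) ∧ ∀ i, b i ≤ ∑ j, A i j * (x j : ℚ)

/-- The solution graph `G(I)` of the ILS `I = (A, b, d)`: two feasible solutions
are adjacent iff their Hamming distance is `1`.  (It is realized as a graph on the
ambient space of integer vectors; infeasible vectors are isolated vertices.) -/
def solGraph {m n : ℕ} (A : Matrix (Fin m) (Fin n) ℚ) (b : Fin m → ℚ) (d : ℕ) :
    SimpleGraph (Fin n → ℤ) where
  Adj x y := Feasible A b d x ∧ Feasible A b d y ∧ hammingDist x y = 1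
  symm := by
    constructor
    rintro x y ⟨hx, hy, hxy⟩
    exact ⟨hy, hx, by rwa [hammingDist_comm]⟩
  loopless := by
    constructor
    rintro x ⟨_, _, hxx⟩
    simp [hammingDist_self] at hxx

/-- A matrix is Horn if each row contains at most one positive entry. -/
def Horn {m n : ℕ} (A : Matrix (Fin m) (Fin n) ℚ) : Prop :=
  ∀ i, ∀ j j' : Fin n, 0 < A i j → 0 < A i j' → j = j'

lemma feasible_min_aux {m n : ℕ} {A : Matrix (Fin m) (Fin n) ℚ} {b : Fin m → ℚ} {d : ℕ}
    {x y : Fin n → ℤ} (hx : Feasible A b d x) (i : Fin m)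
    (hzw : ∀ j, 0 < A i j → x j ≤ y j) :
    b i ≤ ∑ j, A i j * ((min (x j) (y j) : ℤ) : ℚ) := by
  refine le_trans (hx.2 i) (Finset.sum_le_sum fun j _ => ?_)
  rcases le_or_gt (A i j) 0 with hA | hA
  · have h : ((min (x j) (y j) : ℤ) : ℚ) ≤ (x j : ℚ) := by
      exact_mod_cast min_le_left _ _
    exact mul_le_mul_of_nonpos_left h hA
  · rw [min_eq_left (hzw j hA)]

lemma feasible_min_aux' {m n : ℕ} {A : Matrix (Fin m) (Fin n) ℚ} {b : Fin m → ℚ} {d : ℕ}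
    {x y : Fin n → ℤ} (hy : Feasible A b d y) (i : Fin m)
    (hzw : ∀ j, 0 < A i j → y j ≤ x j) :
    b i ≤ ∑ j, A i j * ((min (x j) (y j) : ℤ) : ℚ) := by
  refine le_trans (hy.2 i) (Finset.sum_le_sum fun j _ => ?_)
  rcases le_or_gt (A i j) 0 with hA | hA
  · have h : ((min (x j) (y j) : ℤ) : ℚ) ≤ (y j : ℚ) := by
      exact_mod_cast min_le_right _ _
    exact mul_le_mul_of_nonpos_left h hA
  · rw [min_eq_right (hzw j hA)]

lemma feasible_min {m n : ℕ} {A : Matrix (Fin m) (Fin n) ℚ} {b : Fin m → ℚ} {d : ℕ}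
    (hHorn : Horn A) {x y : Fin n → ℤ} (hx : Feasible A b d x) (hy : Feasible A b d y) :
    Feasible A b d (fun j => min (x j) (y j)) := by
  constructor
  · intro j
    exact ⟨le_min (hx.1 j).1 (hy.1 j).1, min_le_of_left_le (hx.1 j).2⟩
  · intro i
    by_cases hpos : ∃ j0, 0 < A i j0
    · obtain ⟨j0, hj0⟩ := hpos
      rcases le_total (x j0) (y j0) with hxy | hxy
      · exact feasible_min_aux hx i fun j hj => by
          rwa [hHorn i j j0 hj hj0]
      · exact feasible_min_aux' hy i fun j hj => by
          rwa [hHorn i j j0 hj hj0]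
    · push_neg at hpos
      exact feasible_min_aux hx i fun j hj => absurd hj (not_lt.mpr (hpos j))

lemma walk_min {m n : ℕ} {A : Matrix (Fin m) (Fin n) ℚ} {b : Fin m → ℚ} {d : ℕ}
    (hHorn : Horn A) {x y : Fin n → ℤ} (p : (solGraph A b d).Walk x y) :
    ∀ c : Fin n → ℤ, Feasible A b d c → (∀ j, c j ≤ x j) →
    ∃ (ℓ : ℕ) (u : ℕ → Fin n → ℤ),
      u 0 = c ∧ Feasible A b d (u ℓ) ∧ (∀ j, u ℓ j ≤ y j) ∧
      (∀ i < ℓ, (solGraph A b d).Adj (u i) (u (i + 1))) ∧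
      (∀ i < ℓ, ∀ j, u (i + 1) j ≤ u i j) := by
  induction p with
  | nil =>
    intro c hc hcx
    exact ⟨0, fun _ => c, rfl, hc, hcx, fun i hi => absurd hi (Nat.not_lt_zero i),
      fun i hi => absurd hi (Nat.not_lt_zero i)⟩
  | @cons x x₁ y h p ih =>
    intro c hc hcx
    obtain ⟨hx, hx₁, hdist⟩ := h
    set c' : Fin n → ℤ := fun j => min (c j) (x₁ j) with hc'def
    have hc' : Feasible A b d c' := feasible_min hHorn hc hx₁
    have hc'le : ∀ j, c' j ≤ x₁ j := fun j => min_le_right _ _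
    obtain ⟨ℓ, u, hu0, hufeas, huy, huadj, humono⟩ := ih c' hc' hc'le
    by_cases hcc : c' = c
    · exact ⟨ℓ, u, by rw [hu0, hcc], hufeas, huy, huadj, humono⟩
    · -- c and c' differ in exactly one coordinate
      have hsub : (Finset.univ.filter fun j => c j ≠ c' j) ⊆
          (Finset.univ.filter fun j => x j ≠ x₁ j) := by
        intro j hj
        simp only [Finset.mem_filter, Finset.mem_univ, true_and] at hj ⊢
        intro hxx
        apply hj
        have : x₁ j = x j := hxx.symm
        have : c j ≤ x₁ j := by rw [this]; exact hcx j
        simp [hc'def, min_eq_left this]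
      have hle1 : hammingDist c c' ≤ 1 := by
        calc hammingDist c c' ≤ hammingDist x x₁ := Finset.card_le_card hsub
          _ = 1 := hdist
      have hge1 : 0 < hammingDist c c' := hammingDist_pos.mpr (Ne.symm hcc)
      have hdcc : hammingDist c c' = 1 := le_antisymm hle1 hge1
      have hadjcc : (solGraph A b d).Adj c c' := ⟨hc, hc', hdcc⟩
      refine ⟨ℓ + 1, fun i => match i with | 0 => c | i + 1 => u i, rfl, hufeas, huy, ?_, ?_⟩
      · intro i hi
        match i with
        | 0 => simpa [hu0] using hadjcc
        | i + 1 => exact huadj i (by omega)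
      · intro i hi j
        match i with
        | 0 => simpa [hu0, hc'def] using min_le_left (c j) (x₁ j)
        | i + 1 => exact humono i (by omega) j

theorem stmt_4 {m n : ℕ} (A : Matrix (Fin m) (Fin n) ℚ) (b : Fin m → ℚ) (d : ℕ)
    (hd : 0 < d) (hHorn : Horn A)
    (s mvec : Fin n → ℤ) (hs : Feasible A b d s)
    (hm : Feasible A b d mvec)
    (hreach : (solGraph A b d).Reachable mvec s)
    (hmin : ∀ x, Feasible A b d x → (solGraph A b d).Reachable x s → ∀ j, mvec j ≤ x j) :
    ∃ (ℓ : ℕ) (u : ℕ → Fin n → ℤ),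
      u 0 = s ∧ u ℓ = mvec ∧
      (∀ i < ℓ, (solGraph A b d).Adj (u i) (u (i + 1))) ∧
      (∀ i < ℓ, ∀ j, u (i + 1) j ≤ u i j) := by
  obtain ⟨p⟩ := hreach.symm
  obtain ⟨ℓ, u, hu0, hufeas, huy, huadj, humono⟩ :=
    walk_min hHorn p s hs (fun j => le_refl _)
  have hreachu : ∀ k, k ≤ ℓ → (solGraph A b d).Reachable (u 0) (u k) := by
    intro k hk
    induction k with
    | zero => exact SimpleGraph.Reachable.refl _
    | succ k ihk =>
      exact (ihk (by omega)).trans (huadj k (by omega)).reachable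
  have hr : (solGraph A b d).Reachable (u ℓ) s := by
    rw [← hu0]; exact (hreachu ℓ le_rfl).symm
  have heq : u ℓ = mvec :=
    funext fun j => le_antisymm (huy j) (hmin (u ℓ) hufeas hr j)
  exact ⟨ℓ, u, hu0, heq, huadj, humono⟩
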